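/- Define φ(x; μ) = exp(-(x-μ)²/2) for x, μ ∈ ℝ. Then the partial derivatives ∂_μ φ(x; μ₁) and ∂_μ φ(x; μ₂), viewed as functions of x in L²(ℝ), are linearly dependent if and only if μ₁ = μ₂; consequently, for the two-wave parametrization u(θ, x) = φ(x; θ₁) + φ(x; θ₂), the Jacobian map η ↦ η₁ ∂_μφ(x; θ₁) + η₂ ∂_μφ(x; θ₂) has nontrivial kernel exactly when θ₁ = θ₂, with kernel spanned by (1, -1). -/
import Mathlib


open MeasureTheory

/-- `∂_μ φ(x; μ)` for the Gaussian bump `φ(x; μ) = exp(-(x-μ)²/2)`. -/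
noncomputable def dmuPhi (μ x : ℝ) : ℝ := (x - μ) * Real.exp (-(x - μ) ^ 2 / 2)

lemma dmuPhi_cont (μ : ℝ) : Continuous (dmuPhi μ) := by
  unfold dmuPhi; fun_prop

lemma dmuPhi_self (μ : ℝ) : dmuPhi μ μ = 0 := by simp [dmuPhi]

lemma ae_to_eq {a b μ₁ μ₂ : ℝ}
    (h : (fun x => a * dmuPhi μ₁ x + b * dmuPhi μ₂ x) =ᵐ[volume] 0) :
    ∀ x, a * dmuPhi μ₁ x + b * dmuPhi μ₂ x = 0 := by
  have hc : Continuous (fun x => a * dmuPhi μ₁ x + b * dmuPhi μ₂ x) := by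
    have := dmuPhi_cont μ₁; have := dmuPhi_cont μ₂; fun_prop
  have := (Continuous.ae_eq_iff_eq volume hc continuous_const).mp h
  intro x; exact congrFun this x

lemma key_ne {a b μ₁ μ₂ : ℝ} (hne : μ₁ ≠ μ₂)
    (h : (fun x => a * dmuPhi μ₁ x + b * dmuPhi μ₂ x) =ᵐ[volume] 0) :
    a = 0 ∧ b = 0 := by
  have hp := ae_to_eq h
  have h1 := hp μ₁
  have h2 := hp μ₂
  rw [dmuPhi_self] at h1 h2
  simp only [dmuPhi, mul_zero, zero_add, add_zero] at h1 h2
  have e1 : Real.exp (-(μ₁ - μ₂) ^ 2 / 2) ≠ 0 := Real.exp_ne_zero _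
  have e2 : Real.exp (-(μ₂ - μ₁) ^ 2 / 2) ≠ 0 := Real.exp_ne_zero _
  have d1 : μ₁ - μ₂ ≠ 0 := sub_ne_zero.mpr hne
  have d2 : μ₂ - μ₁ ≠ 0 := sub_ne_zero.mpr hne.symm
  constructor
  · rcases mul_eq_zero.mp h2 with h | h
    · exact h
    · exact absurd h (mul_ne_zero d2 e2)
  · rcases mul_eq_zero.mp h1 with h | h
    · exact h
    · exact absurd h (mul_ne_zero d1 e1)

lemma key_eq {a b μ : ℝ} :
    (fun x => a * dmuPhi μ x + b * dmuPhi μ x) =ᵐ[volume] 0 ↔ a + b = 0 := by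
  constructor
  · intro h
    have h1 := ae_to_eq h (μ + 1)
    have : dmuPhi μ (μ + 1) = Real.exp (-1 / 2) := by
      simp [dmuPhi]
    rw [this] at h1
    have : (a + b) * Real.exp (-1 / 2) = 0 := by ring_nf; ring_nf at h1; linarith
    rcases mul_eq_zero.mp this with h | h
    · exact h
    · exact absurd h (Real.exp_ne_zero _)
  · intro h
    have : (fun x => a * dmuPhi μ x + b * dmuPhi μ x) = 0 := by
      funext x
      have : a * dmuPhi μ x + b * dmuPhi μ x = (a + b) * dmuPhi μ x := by ring
      simp [this, h]
    rw [this]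

/-- Equality in `L²(ℝ)` is almost-everywhere equality with respect to
Lebesgue measure. -/
theorem gaussian_bump_derivatives_dependence
    (μ₁ μ₂ : ℝ) :
    ((∃ c : ℝ × ℝ, c ≠ 0 ∧
        (fun x => c.1 * dmuPhi μ₁ x + c.2 * dmuPhi μ₂ x) =ᵐ[volume] 0)
      ↔ μ₁ = μ₂) ∧
    (∀ θ₁ θ₂ : ℝ,
      (({η : ℝ × ℝ |
          (fun x => η.1 * dmuPhi θ₁ x + η.2 * dmuPhi θ₂ x) =ᵐ[volume] 0}
            ≠ {0}) ↔ θ₁ = θ₂) ∧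
      (θ₁ = θ₂ →
        {η : ℝ × ℝ |
            (fun x => η.1 * dmuPhi θ₁ x + η.2 * dmuPhi θ₂ x) =ᵐ[volume] 0}
          = {η : ℝ × ℝ | ∃ t : ℝ, η = t • ((1 : ℝ), (-1 : ℝ))})) := by
  have main : ∀ a b : ℝ, (∃ c : ℝ × ℝ, c ≠ 0 ∧
        (fun x => c.1 * dmuPhi a x + c.2 * dmuPhi b x) =ᵐ[volume] 0) ↔ a = b := by
    intro a b
    constructor
    · rintro ⟨c, hc, h⟩
      by_contra hne
      rcases key_ne hne h with ⟨h1, h2⟩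
      exact hc (Prod.ext h1 h2)
    · rintro rfl
      refine ⟨(1, -1), by simp, ?_⟩
      exact key_eq.mpr (by norm_num)
  refine ⟨main μ₁ μ₂, fun θ₁ θ₂ => ⟨?_, ?_⟩⟩
  · constructor
    · intro hne
      by_contra hθ
      apply hne
      ext η
      simp only [Set.mem_setOf_eq, Set.mem_singleton_iff]
      constructor
      · intro h
        rcases key_ne hθ h with ⟨h1, h2⟩
        exact Prod.ext h1 h2
      · rintro rfl
        have : (fun x => (0:ℝ×ℝ).1 * dmuPhi θ₁ x + (0:ℝ×ℝ).2 * dmuPhi θ₂ x) = 0 := by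
          funext x; simp
        rw [this]
    · rintro rfl
      intro hset
      have : ((1 : ℝ), (-1 : ℝ)) ∈ {η : ℝ × ℝ |
          (fun x => η.1 * dmuPhi θ₁ x + η.2 * dmuPhi θ₁ x) =ᵐ[volume] 0} := by
        exact key_eq.mpr (by norm_num)
      rw [hset] at this
      simp at this
  · rintro rfl
    ext η
    simp only [Set.mem_setOf_eq]
    rw [key_eq]
    constructor
    · intro h
      exact ⟨η.1, by ext <;> simp <;> linarith⟩
    · rintro ⟨t, rfl⟩
      simp
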